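/- In the bandit-over-bandits case, the value function V^{π_θ} = (1/(1−γ))·π_θᵀ𝔯 is β-smooth in θ ∈ ℝ^M with β = 5/(2(1−γ)): for all θ and unit vectors y, |yᵀ (∂²V^{π_θ}/∂θ²) y| ≤ 5/(2(1−γ)). -/

import Mathlib

noncomputable def softmax {M : ℕ} (θ : Fin M → ℝ) (m : Fin M) : ℝ :=
  Real.exp (θ m) / ∑ m', Real.exp (θ m')

/-!
Along the line `t ↦ θ + t • y` the derivative of a softmax average `E[f]` is the covariance
`E[f y] - E[f] E[y]`, so the second directional derivative of `V` is `1 / (1 - γ)` times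
`E[(r - p) y²] - 2 E[y] E[(r - p) y]` with `p = E[r]`. Since `|r m - p| ≤ 1 - π m`, each weight
satisfies `π m |r m - p| ≤ 1 / 4`, so the first term is at most `1 / 4`; for a unit vector `|y m| ≤ 1`,
so the second is at most `2`. Hence the bound `9 / 4 ≤ 5 / 2` times `1 / (1 - γ)`.
-/

open Finset Real

theorem iteratedFDeriv_apply_const_eq_iteratedDeriv_line {𝕜 E F : Type*}
    [NontriviallyNormedField 𝕜] [NormedAddCommGroup E] [NormedSpace 𝕜 E] [NormedAddCommGroup F]
    [NormedSpace 𝕜 F] {f : E → F} {n : WithTop ℕ∞} {i : ℕ} (hf : ContDiff 𝕜 n f) (hi : i ≤ n)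
    (x y : E) :
    iteratedFDeriv 𝕜 i f x (fun _ => y) = iteratedDeriv i (fun t : 𝕜 => f (x + t • y)) 0 := by
  have hline : (fun t : 𝕜 => f (x + t • y)) =
      (fun z => f (x + z)) ∘ ContinuousLinearMap.toSpanSingleton 𝕜 y := rfl
  have hshift : ContDiff 𝕜 n (fun z => f (x + z)) := hf.comp (contDiff_const.add contDiff_id)
  rw [iteratedDeriv_eq_iteratedFDeriv, hline,
    ContinuousLinearMap.iteratedFDeriv_comp_right _ hshift _ hi, iteratedFDeriv_comp_add_left]
  simp

noncomputable def weightedAvg {ι : Type*} [Fintype ι] (w f : ι → ℝ) : ℝ := ∑ i, w i * f i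

section Bounds

variable {ι : Type*} [Fintype ι] {w r y : ι → ℝ}

theorem abs_weightedAvg_le (hw0 : ∀ i, 0 ≤ w i) (hw1 : ∑ i, w i = 1) {g : ι → ℝ} {C : ℝ}
    (hg : ∀ i, |g i| ≤ C) : |weightedAvg w g| ≤ C :=
  calc |weightedAvg w g| ≤ ∑ i, |w i * g i| := abs_sum_le_sum_abs _ _
    _ ≤ ∑ i, w i * C := sum_le_sum fun i _ => by
        rw [abs_mul, abs_of_nonneg (hw0 i)]; exact mul_le_mul_of_nonneg_left (hg i) (hw0 i)
    _ = C := by rw [← sum_mul, hw1, one_mul]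

theorem abs_sub_weightedAvg_le (hw0 : ∀ i, 0 ≤ w i) (hw1 : ∑ i, w i = 1)
    (hr : ∀ i, r i ∈ Set.Icc (0 : ℝ) 1) (i : ι) : |r i - weightedAvg w r| ≤ 1 - w i := by
  classical
  have hsplit : weightedAvg w r = w i * r i + ∑ j ∈ univ.erase i, w j * r j :=
    (add_sum_erase _ _ (mem_univ i)).symm
  have hrest : ∑ j ∈ univ.erase i, w j = 1 - w i := by
    rw [← hw1, ← add_sum_erase _ _ (mem_univ i), add_sub_cancel_left]
  have hlow : 0 ≤ ∑ j ∈ univ.erase i, w j * r j :=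
    sum_nonneg fun j _ => mul_nonneg (hw0 j) (hr j).1
  have hup : ∑ j ∈ univ.erase i, w j * r j ≤ 1 - w i :=
    hrest ▸ sum_le_sum fun j _ => mul_le_of_le_one_right (hw0 j) (hr j).2
  rw [abs_le, hsplit]
  constructor <;> nlinarith [(hr i).1, (hr i).2, hw0 i]

theorem mul_abs_sub_weightedAvg_le (hw0 : ∀ i, 0 ≤ w i) (hw1 : ∑ i, w i = 1)
    (hr : ∀ i, r i ∈ Set.Icc (0 : ℝ) 1) (i : ι) : w i * |r i - weightedAvg w r| ≤ 1 / 4 :=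
  calc w i * |r i - weightedAvg w r| ≤ w i * (1 - w i) :=
        mul_le_mul_of_nonneg_left (abs_sub_weightedAvg_le hw0 hw1 hr i) (hw0 i)
    _ ≤ 1 / 4 := by nlinarith [sq_nonneg (w i - 1 / 2)]

theorem abs_le_one_of_sum_sq_eq_one (hy : ∑ i, y i ^ 2 = 1) (i : ι) : |y i| ≤ 1 := by
  rw [← sq_le_one_iff_abs_le_one, ← hy]
  exact single_le_sum (fun j _ => sq_nonneg (y j)) (mem_univ i)

theorem abs_weightedAvg_hessian_le (hw0 : ∀ i, 0 ≤ w i) (hw1 : ∑ i, w i = 1)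
    (hr : ∀ i, r i ∈ Set.Icc (0 : ℝ) 1) (hy : ∑ i, y i ^ 2 = 1) :
    |weightedAvg w (r * y * y) - weightedAvg w r * weightedAvg w (y * y) -
        2 * weightedAvg w y * (weightedAvg w (r * y) - weightedAvg w r * weightedAvg w y)|
      ≤ 9 / 4 := by
  set p := weightedAvg w r
  have hcenter : ∀ g : ι → ℝ, weightedAvg w (r * g) - p * weightedAvg w g =
      weightedAvg w (fun i => (r i - p) * g i) := fun g => by
    simp only [weightedAvg, mul_sum, ← sum_sub_distrib, Pi.mul_apply]
    exact sum_congr rfl fun i _ => by ring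
  have hquad : |weightedAvg w (fun i => (r i - p) * (y * y) i)| ≤ 1 / 4 :=
    calc _ ≤ ∑ i, |w i * ((r i - p) * (y * y) i)| := abs_sum_le_sum_abs _ _
      _ ≤ ∑ i, 1 / 4 * y i ^ 2 := sum_le_sum fun i _ => by
          rw [Pi.mul_apply, abs_mul, abs_mul, abs_of_nonneg (hw0 i), abs_mul_self, ← mul_assoc, sq]
          exact mul_le_mul_of_nonneg_right (mul_abs_sub_weightedAvg_le hw0 hw1 hr i)
            (mul_self_nonneg _)
      _ = 1 / 4 := by rw [← mul_sum, hy, mul_one]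
  have hmean : |weightedAvg w y| ≤ 1 :=
    abs_weightedAvg_le hw0 hw1 (abs_le_one_of_sum_sq_eq_one hy)
  have hcov : |weightedAvg w (fun i => (r i - p) * y i)| ≤ 1 :=
    abs_weightedAvg_le hw0 hw1 fun i => by
      rw [abs_mul]
      exact mul_le_one₀ ((abs_sub_weightedAvg_le hw0 hw1 hr i).trans (by linarith [hw0 i]))
        (abs_nonneg _) (abs_le_one_of_sum_sq_eq_one hy i)
  rw [mul_assoc r, hcenter, hcenter]
  calc _ ≤ |weightedAvg w (fun i => (r i - p) * (y * y) i)| +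
        |2 * weightedAvg w y * weightedAvg w (fun i => (r i - p) * y i)| := abs_sub _ _
    _ = |weightedAvg w (fun i => (r i - p) * (y * y) i)| +
        2 * (|weightedAvg w y| * |weightedAvg w (fun i => (r i - p) * y i)|) := by
        rw [abs_mul, abs_mul, abs_two, mul_assoc]
    _ ≤ 1 / 4 + 2 * (1 * 1) := by gcongr
    _ = 9 / 4 := by norm_num

end Bounds

section Softmax

variable {M : ℕ}

theorem softmax_nonneg (θ : Fin M → ℝ) (m : Fin M) : 0 ≤ softmax θ m :=
  div_nonneg (exp_pos _).le (sum_nonneg fun _ _ => (exp_pos _).le)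

theorem sum_softmax [Nonempty (Fin M)] (θ : Fin M → ℝ) : ∑ m, softmax θ m = 1 := by
  simp only [softmax, ← sum_div]
  exact div_self (sum_pos (fun m _ => exp_pos _) univ_nonempty).ne'

theorem weightedAvg_softmax (θ f : Fin M → ℝ) :
    weightedAvg (softmax θ) f = (∑ m, f m * exp (θ m)) / ∑ m, exp (θ m) := by
  simp only [weightedAvg, softmax, sum_div]
  exact sum_congr rfl fun m _ => by ring

theorem contDiff_weightedAvg_softmax [Nonempty (Fin M)] (f : Fin M → ℝ) {n : WithTop ℕ∞} :
    ContDiff ℝ n fun θ : Fin M → ℝ => weightedAvg (softmax θ) f := by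
  simp only [weightedAvg_softmax]
  exact ContDiff.div (by fun_prop) (by fun_prop)
    fun θ => (sum_pos (fun m _ => exp_pos _) univ_nonempty).ne'

theorem hasDerivAt_sum_mul_exp_line (θ y f : Fin M → ℝ) (t : ℝ) :
    HasDerivAt (fun t : ℝ => ∑ m, f m * exp ((θ + t • y) m))
      (∑ m, (f * y) m * exp ((θ + t • y) m)) t := by
  refine HasDerivAt.fun_sum fun m _ => ?_
  have h := (((hasDerivAt_id t).mul_const (y m)).const_add (θ m)).exp.const_mul (f m)
  refine h.congr_deriv ?_
  simp only [Pi.mul_apply, Pi.add_apply, Pi.smul_apply, smul_eq_mul, id, one_mul]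
  ring

theorem hasDerivAt_weightedAvg_softmax_line [Nonempty (Fin M)] (θ y f : Fin M → ℝ) (t : ℝ) :
    HasDerivAt (fun t : ℝ => weightedAvg (softmax (θ + t • y)) f)
      (weightedAvg (softmax (θ + t • y)) (f * y) -
        weightedAvg (softmax (θ + t • y)) f * weightedAvg (softmax (θ + t • y)) y) t := by
  have hZ : ∑ m, exp ((θ + t • y) m) ≠ 0 := (sum_pos (fun m _ => exp_pos _) univ_nonempty).ne'
  have h := (hasDerivAt_sum_mul_exp_line θ y f t).fun_div (hasDerivAt_sum_mul_exp_line θ y 1 t)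
    (by simpa using hZ)
  simp only [Pi.one_apply, one_mul, Pi.mul_apply] at h
  simp only [weightedAvg_softmax]
  refine h.congr_deriv ?_
  simp only [Pi.mul_apply]
  field_simp

theorem iteratedDeriv_two_weightedAvg_softmax_line [Nonempty (Fin M)] (θ y f : Fin M → ℝ) :
    iteratedDeriv 2 (fun t : ℝ => weightedAvg (softmax (θ + t • y)) f) 0 =
      weightedAvg (softmax θ) (f * y * y) -
        weightedAvg (softmax θ) f * weightedAvg (softmax θ) (y * y) -
        2 * weightedAvg (softmax θ) y *
          (weightedAvg (softmax θ) (f * y) -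
            weightedAvg (softmax θ) f * weightedAvg (softmax θ) y) := by
  have hderiv : deriv (fun t : ℝ => weightedAvg (softmax (θ + t • y)) f) = fun t =>
      weightedAvg (softmax (θ + t • y)) (f * y) -
        weightedAvg (softmax (θ + t • y)) f * weightedAvg (softmax (θ + t • y)) y :=
    funext fun t => (hasDerivAt_weightedAvg_softmax_line θ y f t).deriv
  have h := (hasDerivAt_weightedAvg_softmax_line θ y (f * y) 0).fun_sub
    ((hasDerivAt_weightedAvg_softmax_line θ y f 0).fun_mul
      (hasDerivAt_weightedAvg_softmax_line θ y y 0))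
  rw [iteratedDeriv_succ, iteratedDeriv_one, hderiv, h.deriv, zero_smul, add_zero]
  ring

end Softmax

theorem stmt_11 {M : ℕ} (r : Fin M → ℝ) (hr : ∀ m, r m ∈ Set.Icc (0 : ℝ) 1)
    (γ : ℝ) (hγ : γ ∈ Set.Ioo (0 : ℝ) 1)
    (V : EuclideanSpace ℝ (Fin M) → ℝ)
    (hV : ∀ θ : EuclideanSpace ℝ (Fin M),
      V θ = (1 / (1 - γ)) * ∑ m, softmax (WithLp.equiv 2 (Fin M → ℝ) θ) m * r m) :
    ∀ (θ y : EuclideanSpace ℝ (Fin M)), ‖y‖ = 1 →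
      |iteratedFDeriv ℝ 2 V θ ![y, y]| ≤ 5 / (2 * (1 - γ)) := by
  intro θ y hy
  have hy2 : ∑ m, y m ^ 2 = 1 := by rw [← EuclideanSpace.real_norm_sq_eq, hy, one_pow]
  have : Nonempty (Fin M) := by
    by_contra hM
    simp [not_nonempty_iff.mp hM] at hy2
  have hV' : V = fun θ => 1 / (1 - γ) * weightedAvg (softmax θ.ofLp) r := funext hV
  have hsmooth : ContDiff ℝ 2 V :=
    hV' ▸ (contDiff_const.mul (contDiff_weightedAvg_softmax r)).comp PiLp.contDiff_ofLp
  have hline : iteratedFDeriv ℝ 2 V θ ![y, y] = 1 / (1 - γ) *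
      iteratedDeriv 2 (fun t : ℝ => weightedAvg (softmax (θ.ofLp + t • y.ofLp)) r) 0 := by
    rw [show ![y, y] = fun _ => y by ext i; fin_cases i <;> rfl,
      iteratedFDeriv_apply_const_eq_iteratedDeriv_line hsmooth le_rfl, hV']
    simp only [WithLp.ofLp_add, WithLp.ofLp_smul]
    exact iteratedDeriv_const_mul_field _ _
  have hc : 0 < 1 / (1 - γ) := one_div_pos.mpr (sub_pos.mpr hγ.2)
  rw [hline, iteratedDeriv_two_weightedAvg_softmax_line, abs_mul, abs_of_pos hc]
  calc _ ≤ 1 / (1 - γ) * (9 / 4) := mul_le_mul_of_nonneg_left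
        (abs_weightedAvg_hessian_le (softmax_nonneg _) (sum_softmax _) hr hy2) hc.le
    _ ≤ 5 / (2 * (1 - γ)) := by
        rw [div_mul_eq_mul_div, one_mul, div_le_div_iff₀ (sub_pos.mpr hγ.2) (by linarith [hγ.2])]
        linarith [hγ.2]
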